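/- arXiv:math/0606505 — 4 statements merged into one kernel-verified Lean document; each statement's English description precedes it below -/
import Mathlib

section
/- For every natural number n, the alternating sum ∑_{j=0}^{n+1} (-1)^j * C(n+1, j) * (n+1-2j)^{n+1} equals (n+1)! * 2^{n+1}. -/
/-!
Reversing the summation index `j ↦ n + 1 - j` turns the sum into Newton's formula for the
`(n + 1)`-st forward difference with step `2` of `x ↦ x ^ (n + 1)` at `-(n + 1)`, and the
`m`-th forward difference with step `h` of `x ↦ x ^ m` is the constant `m! * h ^ m`.
-/

open Finset Nat fwdDiff

theorem fwdDiff_iter_eq_fwdDiff_iter_one_comp {S G : Type*} [Ring S] [AddCommGroup G]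
    (f : S → G) (h y : S) (n : ℕ) :
    Δ_[h] ^[n] f y = Δ_[1] ^[n] (fun t ↦ f (y + t * h)) 0 := by
  simp only [fwdDiff_iter_eq_sum_shift, zero_add, nsmul_eq_mul, mul_one]

variable {R : Type*} [CommRing R]

theorem add_mul_pow_eq_sum_range_add_smul_pow (y h : R) (n : ℕ) :
    (fun t : R ↦ (y + t * h) ^ n) =
      (fun t ↦ ∑ k ∈ range n, (n.choose k * y ^ (n - k) * h ^ k) * t ^ k) +
        h ^ n • fun t ↦ t ^ n := by
  funext t
  simp only [Pi.add_apply, Pi.smul_apply, smul_eq_mul, add_comm y, add_pow, sum_range_succ,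
    Nat.choose_self, Nat.sub_self, pow_zero, Nat.cast_one, mul_one]
  congr 1
  · exact sum_congr rfl fun k _ ↦ by ring
  · ring

theorem fwdDiff_iter_pow_self (h : R) (n : ℕ) :
    Δ_[h] ^[n] (fun x : R ↦ x ^ n) = fun _ ↦ n ! * h ^ n := by
  funext y
  rw [fwdDiff_iter_eq_fwdDiff_iter_one_comp, add_mul_pow_eq_sum_range_add_smul_pow,
    fwdDiff_iter_add, fwdDiff_iter_sum_mul_pow_eq_zero, fwdDiff_iter_const_smul,
    fwdDiff_iter_eq_factorial]
  simp [mul_comm]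

theorem alternating_sum_top (n : ℕ) :
    ∑ j ∈ Finset.range (n + 2),
      (-1 : ℤ) ^ j * (Nat.choose (n + 1) j : ℤ) * ((n : ℤ) + 1 - 2 * j) ^ (n + 1)
      = (Nat.factorial (n + 1) : ℤ) * 2 ^ (n + 1) := by
  calc _ = ∑ k ∈ range (n + 1 + 1),
        ((-1 : ℤ) ^ (n + 1 - k) * (n + 1).choose k) • (-(n + 1 : ℤ) + k • 2) ^ (n + 1) := by
        rw [← sum_range_reflect]
        refine sum_congr rfl fun k hk_mem ↦ ?_
        have hk : k ≤ n + 1 := Nat.lt_succ_iff.mp (mem_range.mp hk_mem)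
        rw [show n + 2 - 1 - k = n + 1 - k by omega, Nat.choose_symm hk, Nat.cast_sub hk]
        push_cast
        ring
    _ = Δ_[2] ^[n + 1] (fun x : ℤ ↦ x ^ (n + 1)) (-(n + 1 : ℤ)) :=
        (fwdDiff_iter_eq_sum_shift 2 (fun x : ℤ ↦ x ^ (n + 1)) (n + 1) _).symm
    _ = _ := by rw [fwdDiff_iter_pow_self]
end

section
/- For every natural number n, the alternating sum ∑_{j=0}^{n+1} (-1)^j * C(n+1, j) * (n+1-2j)^{n+2} equals 0. -/
/-!
The reflection `j ↦ m - j` fixes `C(m, j)`, negates the base `m - 2j` and changes the sign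
`(-1)^j` by `(-1)^m`, so it multiplies the `j`-th term of
`∑ (-1)^j C(m, j) (m - 2j)^k` by `(-1)^(m + k)`. When `m + k` is odd the sum therefore equals its
own negative and vanishes; here `m = n + 1` and `k = n + 2`.
-/

open Finset

theorem Finset.sum_range_succ_eq_zero_of_antisymm {M : Type*} [AddCommGroup M]
    [IsAddTorsionFree M] {f : ℕ → M} {m : ℕ} (hf : ∀ j ≤ m, f (m - j) = -f j) :
    ∑ j ∈ range (m + 1), f j = 0 := by
  rw [← self_eq_neg]
  calc ∑ j ∈ range (m + 1), f j = ∑ j ∈ range (m + 1), f (m - j) :=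
        (sum_range_reflect f (m + 1)).symm
    _ = ∑ j ∈ range (m + 1), -f j :=
        sum_congr rfl fun j hj => hf j (Nat.lt_succ_iff.mp (mem_range.mp hj))
    _ = -∑ j ∈ range (m + 1), f j := sum_neg_distrib _

theorem neg_one_pow_sub {R : Type*} [Monoid R] [HasDistribNeg R] {m j : ℕ} (h : j ≤ m) :
    (-1 : R) ^ (m - j) = (-1) ^ m * (-1) ^ j := by
  rw [← Nat.sub_add_cancel h, pow_add, mul_assoc, ← pow_add, Even.neg_one_pow ⟨j, rfl⟩, mul_one,
    Nat.add_sub_cancel]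

theorem alternating_choose_mul_pow_reflect {R : Type*} [CommRing R] {m k j : ℕ} (h : j ≤ m) :
    (-1 : R) ^ (m - j) * (m.choose (m - j) : R) * ((m : R) - 2 * ((m - j : ℕ) : R)) ^ k =
      (-1) ^ (m + k) * ((-1) ^ j * (m.choose j : R) * ((m : R) - 2 * j) ^ k) := by
  have hbase : (m : R) - 2 * ((m - j : ℕ) : R) = -((m : R) - 2 * j) := by
    rw [Nat.cast_sub h]; ring
  rw [Nat.choose_symm h, hbase, neg_pow ((m : R) - 2 * j), neg_one_pow_sub h, pow_add]
  ring

theorem alternating_sum_choose_mul_pow_eq_zero_of_odd {R : Type*} [CommRing R]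
    [IsAddTorsionFree R] {m k : ℕ} (hmk : Odd (m + k)) :
    ∑ j ∈ range (m + 1), (-1 : R) ^ j * (m.choose j : R) * ((m : R) - 2 * j) ^ k = 0 :=
  sum_range_succ_eq_zero_of_antisymm fun j hj => by
    rw [alternating_choose_mul_pow_reflect hj, hmk.neg_one_pow, neg_one_mul]

theorem alternating_sum_n_plus_two (n : ℕ) :
    ∑ j ∈ Finset.range (n + 2),
      (-1 : ℤ) ^ j * (Nat.choose (n + 1) j : ℤ) * ((n : ℤ) + 1 - 2 * j) ^ (n + 2) = 0 := by
  have hodd : Odd (n + 1 + (n + 2)) := ⟨n + 1, by ring⟩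
  simpa using alternating_sum_choose_mul_pow_eq_zero_of_odd (R := ℤ) hodd
end

section
/- For all natural numbers n and all i ≤ n with i ≢ n (mod 2), the sum ∑_{j=0}^{n} (-1)^j * C(n, j) * (n-2j)^i equals 0; and for i = n it equals n! * 2^n. -/
/-!
The alternating sum `∑ⱼ (-1)^j C(n, j) p(j)` is `(-1)^n` times the `n`-th forward difference of
`p` at `0`. That difference vanishes on polynomials of degree `< n` and sends a polynomial of
degree `≤ n` to `n!` times its `Xⁿ`-coefficient. For `p(x) = (n - 2x)^i` this coefficient is `0`
when `i < n` and `(-2)^n` when `i = n`.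
-/

open Finset Polynomial Nat

theorem alternating_sum_choose_mul_eq_fwdDiff_iter {R : Type*} [CommRing R] (f : R → R)
    (n : ℕ) :
    ∑ j ∈ range (n + 1), (-1 : R) ^ j * n.choose j * f j = (-1) ^ n * (fwdDiff 1)^[n] f 0 := by
  rw [fwdDiff_iter_eq_sum_shift, mul_sum]
  refine sum_congr rfl fun j hj => ?_
  have hjn : j ≤ n := Nat.lt_succ_iff.mp (mem_range.mp hj)
  obtain ⟨k, rfl⟩ := Nat.exists_eq_add_of_le hjn
  have hsq : (-1 : R) ^ k * (-1) ^ k = 1 := by rw [← mul_pow]; simp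
  simp only [zsmul_eq_mul, nsmul_eq_mul, mul_one, zero_add, pow_add, add_tsub_cancel_left]
  push_cast
  linear_combination (-(-1 : R) ^ j * (j + k).choose j * f j) * hsq

theorem Polynomial.alternating_sum_choose_mul_eval {R : Type*} [CommRing R] (P : R[X]) {n : ℕ}
    (hP : P.natDegree ≤ n) :
    ∑ j ∈ range (n + 1), (-1 : R) ^ j * n.choose j * P.eval (j : R) =
      (-1) ^ n * n ! * P.coeff n := by
  rw [alternating_sum_choose_mul_eq_fwdDiff_iter (fun x => P.eval x), mul_assoc]
  congr 1
  rcases hP.lt_or_eq with hlt | rfl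
  · rw [fwdDiff_iter_eq_zero_of_degree_lt hlt, coeff_eq_zero_of_natDegree_lt hlt]
    simp
  · rw [fwdDiff_iter_degree_eq_factorial]
    simp [mul_comm]

theorem alternating_sum_degree_n (n : ℕ) :
    (∀ i : ℕ, i ≤ n → i % 2 ≠ n % 2 →
      ∑ j ∈ Finset.range (n + 1),
        (-1 : ℤ) ^ j * (Nat.choose n j : ℤ) * ((n : ℤ) - 2 * j) ^ i = 0) ∧
    ∑ j ∈ Finset.range (n + 1),
      (-1 : ℤ) ^ j * (Nat.choose n j : ℤ) * ((n : ℤ) - 2 * j) ^ n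
      = (Nat.factorial n : ℤ) * 2 ^ n := by
  have hL : (C (-2 : ℤ) * X + C (n : ℤ)).natDegree ≤ 1 := natDegree_linear_le
  have hsum (i : ℕ) (hi : i ≤ n) :
      ∑ j ∈ range (n + 1), (-1 : ℤ) ^ j * n.choose j * ((n : ℤ) - 2 * j) ^ i
        = (-1) ^ n * n ! * ((C (-2 : ℤ) * X + C (n : ℤ)) ^ i).coeff n := by
    rw [← alternating_sum_choose_mul_eval _ ((natDegree_pow_le_of_le i hL).trans (by omega))]
    refine sum_congr rfl fun j _ => ?_
    simp only [eval_pow, eval_add, eval_mul, eval_C, eval_X]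
    ring
  refine ⟨fun i hi hpar => ?_, ?_⟩
  · have hin : i < n := hi.lt_of_ne fun h => hpar (h ▸ rfl)
    rw [hsum i hi, coeff_eq_zero_of_natDegree_lt ((natDegree_pow_le_of_le i hL).trans_lt
      (by omega)), mul_zero]
  · have hcoeff : ((C (-2 : ℤ) * X + C (n : ℤ)) ^ n).coeff n = (-2) ^ n := by
      simpa using coeff_pow_of_natDegree_le (m := n) hL
    rw [hsum n le_rfl, hcoeff, mul_assoc, mul_left_comm, ← mul_pow]
    norm_num
end

section
/- Let φ_t(z) = log(∑_{j=0}^{N} |t|^{2m_j} ‖S_j(z)‖²) where the m_j are integers, ‖S_j(z)‖² are continuous nonnegative functions on a compact space X not all vanishing simultaneously, and at least two distinct exponents occur among indices j for which S_j is not identically zero. Let M be the maximum and m the minimum of m_j over indices j with S_j not identically zero, so that M > m. If there exists a point of X at which all S_j with m_j = m vanish, then Osc_X(φ_t) := sup_X φ_t − inf_X φ_t → ∞ as |t| → 0. -/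
open Filter

theorem oscillation_blowup {X : Type*} [TopologicalSpace X] [CompactSpace X] [Nonempty X]
    (N : ℕ) (S : Fin (N + 1) → X → ℝ) (m : Fin (N + 1) → ℤ)
    (hcont : ∀ j, Continuous (S j)) (hnn : ∀ j x, 0 ≤ S j x)
    (hpos : ∀ x, 0 < ∑ j, S j x)
    (T : Finset (Fin (N + 1))) (hT : ∀ j, j ∈ T ↔ ∃ x, S j x ≠ 0)
    (hTne : T.Nonempty)
    (hgap : ∃ j ∈ T, T.inf' hTne m < m j)
    (hvan : ∃ x₀ : X, ∀ j ∈ T, m j = T.inf' hTne m → S j x₀ = 0) :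
    Tendsto
      (fun t : ℝ =>
        (⨆ x : X, Real.log (∑ j, t ^ (2 * m j) * S j x)) -
          ⨅ x : X, Real.log (∑ j, t ^ (2 * m j) * S j x))
      (nhdsWithin 0 (Set.Ioi 0)) atTop := by
  classical
  obtain ⟨j₀, hj₀T, hj₀m⟩ := Finset.exists_mem_eq_inf' hTne m
  obtain ⟨x₁, hx₁⟩ := (hT j₀).mp hj₀T
  have hS₁ : 0 < S j₀ x₁ := lt_of_le_of_ne (hnn j₀ x₁) (Ne.symm hx₁)
  obtain ⟨x₀, hx₀⟩ := hvan
  have hC : 0 < ∑ j, S j x₀ := hpos x₀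
  set μ : ℤ := T.inf' hTne m with hμdef
  set c : ℝ := Real.log (S j₀ x₁) - Real.log (∑ j, S j x₀) with hcdef
  have key : ∀ᶠ t : ℝ in nhdsWithin 0 (Set.Ioi 0),
      (-2) * Real.log t + c ≤
      (⨆ x : X, Real.log (∑ j, t ^ (2 * m j) * S j x)) -
        ⨅ x : X, Real.log (∑ j, t ^ (2 * m j) * S j x) := by
    filter_upwards [Ioo_mem_nhdsGT_of_mem (Set.mem_Ico.mpr ⟨le_refl (0:ℝ), one_pos⟩)]
      with t ht
    obtain ⟨ht0, ht1⟩ := ht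
    have hterm : ∀ x, ∀ j : Fin (N + 1), 0 ≤ t ^ (2 * m j) * S j x := fun x j =>
      mul_nonneg (zpow_nonneg ht0.le _) (hnn j x)
    have hgpos : ∀ x, 0 < ∑ j, t ^ (2 * m j) * S j x := by
      intro x
      obtain ⟨j, hj⟩ := Finset.exists_lt_of_sum_lt
        (show ∑ j : Fin (N+1), (0:ℝ) < ∑ j, S j x by simpa using hpos x)
      exact Finset.sum_pos' (fun j _ => hterm x j)
        ⟨j, Finset.mem_univ j, mul_pos (zpow_pos ht0 _) hj.2⟩
    have hgcont : Continuous fun x => ∑ j, t ^ (2 * m j) * S j x :=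
      continuous_finset_sum _ fun j _ => continuous_const.mul (hcont j)
    obtain ⟨xM, -, hxM⟩ := isCompact_univ.exists_isMaxOn Set.univ_nonempty
      hgcont.continuousOn
    obtain ⟨xm, -, hxm⟩ := isCompact_univ.exists_isMinOn Set.univ_nonempty
      hgcont.continuousOn
    have hbddA : BddAbove (Set.range fun x =>
        Real.log (∑ j, t ^ (2 * m j) * S j x)) := by
      refine ⟨Real.log (∑ j, t ^ (2 * m j) * S j xM), ?_⟩
      rintro y ⟨x, rfl⟩
      exact Real.log_le_log (hgpos x) (hxM (Set.mem_univ x))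
    have hbddB : BddBelow (Set.range fun x =>
        Real.log (∑ j, t ^ (2 * m j) * S j x)) := by
      refine ⟨Real.log (∑ j, t ^ (2 * m j) * S j xm), ?_⟩
      rintro y ⟨x, rfl⟩
      exact Real.log_le_log (hgpos xm) (hxm (Set.mem_univ x))
    -- lower bound for the sup
    have hsup : ((2 * μ : ℤ) : ℝ) * Real.log t + Real.log (S j₀ x₁) ≤
        ⨆ x : X, Real.log (∑ j, t ^ (2 * m j) * S j x) := by
      have h1 : t ^ (2 * m j₀) * S j₀ x₁ ≤ ∑ j, t ^ (2 * m j) * S j x₁ :=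
        Finset.single_le_sum (fun j _ => hterm x₁ j) (Finset.mem_univ j₀)
      have h2 : Real.log (t ^ (2 * m j₀) * S j₀ x₁) ≤
          Real.log (∑ j, t ^ (2 * m j) * S j x₁) :=
        Real.log_le_log (mul_pos (zpow_pos ht0 _) hS₁) h1
      have h3 : Real.log (t ^ (2 * m j₀) * S j₀ x₁) =
          ((2 * m j₀ : ℤ) : ℝ) * Real.log t + Real.log (S j₀ x₁) := by
        rw [Real.log_mul (by positivity) (ne_of_gt hS₁), Real.log_zpow]
      calc ((2 * μ : ℤ) : ℝ) * Real.log t + Real.log (S j₀ x₁)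
          = Real.log (t ^ (2 * m j₀) * S j₀ x₁) := by rw [h3, hj₀m]
        _ ≤ Real.log (∑ j, t ^ (2 * m j) * S j x₁) := h2
        _ ≤ _ := le_ciSup hbddA x₁
    -- upper bound for the inf
    have hinf : (⨅ x : X, Real.log (∑ j, t ^ (2 * m j) * S j x)) ≤
        ((2 * μ + 2 : ℤ) : ℝ) * Real.log t + Real.log (∑ j, S j x₀) := by
      have h1 : ∑ j, t ^ (2 * m j) * S j x₀ ≤ t ^ (2 * μ + 2) * ∑ j, S j x₀ := by
        rw [Finset.mul_sum]
        refine Finset.sum_le_sum fun j _ => ?_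
        rcases eq_or_ne (S j x₀) 0 with h | h
        · simp [h]
        · have hjT : j ∈ T := (hT j).mpr ⟨x₀, h⟩
          have hjm : m j ≠ μ := fun hc => h (hx₀ j hjT hc)
          have hle : μ ≤ m j := Finset.inf'_le m hjT
          have hlt : 2 * μ + 2 ≤ 2 * m j := by omega
          exact mul_le_mul_of_nonneg_right
            (zpow_le_zpow_right_of_le_one₀ ht0 ht1.le hlt) (hnn j x₀)
      have h2 : Real.log (∑ j, t ^ (2 * m j) * S j x₀) ≤
          ((2 * μ + 2 : ℤ) : ℝ) * Real.log t + Real.log (∑ j, S j x₀) := by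
        calc Real.log (∑ j, t ^ (2 * m j) * S j x₀)
            ≤ Real.log (t ^ (2 * μ + 2) * ∑ j, S j x₀) :=
              Real.log_le_log (hgpos x₀) h1
          _ = ((2 * μ + 2 : ℤ) : ℝ) * Real.log t + Real.log (∑ j, S j x₀) := by
              rw [Real.log_mul (by positivity) (ne_of_gt hC), Real.log_zpow]
      exact le_trans (ciInf_le hbddB x₀) h2
    have hcast : ((2 * μ + 2 : ℤ) : ℝ) = ((2 * μ : ℤ) : ℝ) + 2 := by push_cast; ring
    rw [hcdef]
    rw [hcast] at hinf
    linarith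
  have hlim : Tendsto (fun t : ℝ => (-2) * Real.log t + c)
      (nhdsWithin 0 (Set.Ioi 0)) atTop := by
    have h1 : Tendsto (fun t : ℝ => (-2) * Real.log t)
        (nhdsWithin 0 (Set.Ioi 0)) atTop :=
      Real.tendsto_log_nhdsGT_zero.const_mul_atBot_of_neg (by norm_num)
    exact tendsto_atTop_add_const_right _ c h1
  exact tendsto_atTop_mono' _ key hlim
end
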